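/- Let k be a field of characteristic 0 and let R be a commutative Noetherian ring of Krull dimension 1 equipped with an ℕ-grading 𝒜 making R a graded k-algebra with R_0 = k (i.e. 𝒜 0 = k·1). Then R is nearly regular, i.e. the graded maximal ideal m_R of R is contained in the trace ideal tr_R(Ω^1_{R/k}) of the first exterior power of the module of Kähler differentials. -/

import Mathlib

open scoped TensorProduct

/-- The trace ideal of an `R`-module `M`: the sum (supremum) of the ranges of all
`R`-linear maps `M → R`. -/
def traceIdeal (R : Type*) [CommRing R] (M : Type*) [AddCommGroup M] [Module R M] : Ideal R :=
  ⨆ f : M →ₗ[R] R, LinearMap.range f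

/-- The graded maximal (irrelevant) ideal of an `ℕ`-graded algebra: the ideal generated by
all homogeneous elements of positive degree. -/
def irrelevantIdeal {k R : Type*} [CommSemiring k] [CommRing R] [Algebra k R]
    (𝒜 : ℕ → Submodule k R) : Ideal R :=
  Ideal.span {x : R | ∃ n : ℕ, 0 < n ∧ x ∈ 𝒜 n}

/-!
In characteristic zero the Euler derivation `x ↦ n • x` on `𝒜 n` factors through `Ω[R⁄k]`,
and it maps every homogeneous `x` of positive degree `n` to the unit multiple `n • x`.
Hence every generator of the irrelevant ideal lies in the trace ideal of
`Ω[R⁄k] ≃ ⋀[R]^1 Ω[R⁄k]`.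
-/

section TraceIdeal

variable {R M N : Type*} [CommRing R] [AddCommGroup M] [Module R M] [AddCommGroup N] [Module R N]

theorem LinearMap.apply_mem_traceIdeal (f : M →ₗ[R] R) (m : M) : f m ∈ traceIdeal R M :=
  Submodule.mem_iSup_of_mem f (LinearMap.mem_range_self f m)

theorem traceIdeal_le_of_surjective (g : N →ₗ[R] M) (hg : Function.Surjective g) :
    traceIdeal R M ≤ traceIdeal R N :=
  iSup_le fun f => by
    rintro _ ⟨m, rfl⟩
    obtain ⟨n, rfl⟩ := hg m
    exact (f ∘ₗ g).apply_mem_traceIdeal n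

theorem traceIdeal_exteriorPower_one : traceIdeal R (⋀[R]^1 M) = traceIdeal R M :=
  le_antisymm (traceIdeal_le_of_surjective _ (exteriorPower.oneEquiv R M).symm.surjective)
    (traceIdeal_le_of_surjective _ (exteriorPower.oneEquiv R M).surjective)

theorem Derivation.apply_mem_traceIdeal_kaehlerDifferential {k : Type*} [CommRing k]
    [Algebra k R] (D : Derivation k R R) (x : R) : D x ∈ traceIdeal R Ω[R⁄k] := by
  rw [← D.liftKaehlerDifferential_comp_D]
  exact D.liftKaehlerDifferential.apply_mem_traceIdeal _

end TraceIdeal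

section Euler

variable {k R : Type*} [CommSemiring k] [CommSemiring R] [Algebra k R]
  (𝒜 : ℕ → Submodule k R) [GradedAlgebra 𝒜]

noncomputable def eulerMap : R →ₗ[k] R :=
  DirectSum.toModule k ℕ R (fun n => n • (𝒜 n).subtype) ∘ₗ
    (DirectSum.decomposeLinearEquiv 𝒜).toLinearMap

theorem eulerMap_of_mem {n : ℕ} {x : R} (hx : x ∈ 𝒜 n) : eulerMap 𝒜 x = n • x := by
  simp [eulerMap, DirectSum.decomposeLinearEquiv_apply, DirectSum.decompose_of_mem 𝒜 hx,
    ← DirectSum.lof_eq_of k]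

theorem eulerMap_mul (a b : R) : eulerMap 𝒜 (a * b) = a * eulerMap 𝒜 b + b * eulerMap 𝒜 a := by
  induction a using DirectSum.Decomposition.inductionOn 𝒜 with
  | zero => simp
  | add a₁ a₂ h₁ h₂ => simp only [add_mul, map_add, h₁, h₂]; ring
  | @homogeneous m a =>
    induction b using DirectSum.Decomposition.inductionOn 𝒜 with
    | zero => simp
    | add b₁ b₂ h₁ h₂ => simp only [mul_add, map_add, h₁, h₂]; ring
    | @homogeneous n b =>
      rw [eulerMap_of_mem 𝒜 (SetLike.mul_mem_graded a.2 b.2), eulerMap_of_mem 𝒜 a.2,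
        eulerMap_of_mem 𝒜 b.2]
      simp only [nsmul_eq_mul, Nat.cast_add]
      ring

noncomputable def eulerDerivation : Derivation k R R where
  toLinearMap := eulerMap 𝒜
  map_one_eq_zero' := by simp [eulerMap_of_mem 𝒜 (SetLike.one_mem_graded 𝒜)]
  leibniz' a b := by simpa only [smul_eq_mul] using eulerMap_mul 𝒜 a b

theorem eulerDerivation_apply_of_mem {n : ℕ} {x : R} (hx : x ∈ 𝒜 n) :
    eulerDerivation 𝒜 x = n • x :=
  eulerMap_of_mem 𝒜 hx

end Euler

theorem mem_traceIdeal_kaehlerDifferential_of_mem_graded {k R : Type*} [Field k] [CharZero k]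
    [CommRing R] [Algebra k R] (𝒜 : ℕ → Submodule k R) [GradedAlgebra 𝒜]
    {n : ℕ} (hn : 0 < n) {x : R} (hx : x ∈ 𝒜 n) : x ∈ traceIdeal R Ω[R⁄k] := by
  have hn' : (n : k) ≠ 0 := Nat.cast_ne_zero.mpr hn.ne'
  have hx_eq : x = algebraMap k R (n : k)⁻¹ * eulerDerivation 𝒜 x := by
    rw [eulerDerivation_apply_of_mem 𝒜 hx, nsmul_eq_mul, ← mul_assoc,
      ← map_natCast (algebraMap k R), ← map_mul, inv_mul_cancel₀ hn', map_one, one_mul]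
  rw [hx_eq]
  exact Ideal.mul_mem_left _ _ ((eulerDerivation 𝒜).apply_mem_traceIdeal_kaehlerDifferential x)

theorem statement14_general (k R : Type*) [Field k] [CharZero k]
    [CommRing R] [Algebra k R]
    (𝒜 : ℕ → Submodule k R) [GradedAlgebra 𝒜] :
    irrelevantIdeal 𝒜 ≤ traceIdeal R (⋀[R]^1 (Ω[R⁄k])) := by
  rw [traceIdeal_exteriorPower_one, irrelevantIdeal, Ideal.span_le]
  rintro x ⟨n, hn, hx⟩
  exact mem_traceIdeal_kaehlerDifferential_of_mem_graded 𝒜 hn hx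

theorem statement14 (k R : Type*) [Field k] [CharZero k]
    [CommRing R] [IsNoetherianRing R] [Algebra k R]
    (𝒜 : ℕ → Submodule k R) [GradedAlgebra 𝒜] (h0 : 𝒜 0 = 1)
    (hd : ringKrullDim R = 1) :
    irrelevantIdeal 𝒜 ≤ traceIdeal R (⋀[R]^1 (Ω[R⁄k])) :=
  statement14_general k R 𝒜
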